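/- Let σ be a finite Borel measure on ℝ, γ ∈ ℝ, H(z) = z + γ + ∫ (1 + t z)/(z - t) dσ(t) on the upper half-plane, and let x ∈ ℝ, u > 0 satisfy ∫ (1 + t²)/((t - x)² + u²) dσ(t) = 1. Then H'(x + iu) ≠ 0. -/

import Mathlib

/-! Differentiating under the integral sign, `H'(z) = 1 - ∫ (1 + t²)/(z - t)² dσ(t)`.
For `z` off the real line, `Re (1/(z - t)²) < 1/|z - t|²` for every real `t`, so the real part of
`∫ (1 + t²)/(z - t)² dσ` is strictly smaller than `∫ (1 + t²)/|z - t|² dσ = 1` once `σ ≠ 0`;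
hence `Re H'(z) > 0`. -/

open MeasureTheory Complex Metric

lemma integral_lt_integral_of_forall_lt {α : Type*} [MeasurableSpace α] {μ : Measure α}
    (hμ : μ ≠ 0) {f g : α → ℝ} (hf : Integrable f μ) (hg : Integrable g μ)
    (hfg : ∀ x, f x < g x) : ∫ x, f x ∂μ < ∫ x, g x ∂μ := by
  have hsupp : Function.support (g - f) = Set.univ :=
    Set.eq_univ_of_forall fun x => sub_ne_zero.mpr (hfg x).ne'
  have hpos : 0 < ∫ x, (g - f) x ∂μ :=
    (integral_pos_iff_support_of_nonneg (f := g - f) (fun x => sub_nonneg.mpr (hfg x).le)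
      (hg.sub hf)).mpr (by rw [hsupp]; exact Measure.measure_univ_pos.mpr hμ)
  rw [Pi.sub_def, integral_sub hg hf] at hpos
  linarith

namespace Complex

lemma abs_im_le_norm_sub_ofReal (z : ℂ) (t : ℝ) : |z.im| ≤ ‖z - t‖ := by
  simpa using abs_im_le_norm (z - t)

lemma sub_ofReal_ne_zero {z : ℂ} (hz : z.im ≠ 0) (t : ℝ) : z - t ≠ 0 :=
  fun h => hz (by simpa using congrArg im h)

lemma sq_norm_sub_ofReal (z : ℂ) (t : ℝ) : ‖z - t‖ ^ 2 = (t - z.re) ^ 2 + z.im ^ 2 := by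
  rw [Complex.sq_norm, normSq_apply]
  simp only [sub_re, ofReal_re, sub_im, ofReal_im, sub_zero]
  ring

lemma re_ofReal_div_sq_lt {w : ℂ} (hw : w.im ≠ 0) {c : ℝ} (hc : 0 < c) :
    ((c : ℂ) / w ^ 2).re < c / ‖w‖ ^ 2 := by
  have hN : 0 < normSq w := normSq_pos.mpr fun h => hw (by simp [h])
  have hre : (w ^ 2).re < normSq w := by
    rw [sq, mul_re, normSq_apply]
    nlinarith [sq_pos_of_ne_zero hw]
  have key : (w ^ 2).re / normSq w ^ 2 < 1 / normSq w := by
    rw [div_lt_div_iff₀ (by positivity) hN]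
    nlinarith
  rw [div_eq_mul_inv, re_ofReal_mul, inv_re, map_pow, ← normSq_eq_norm_sq, div_eq_mul_one_div c]
  exact mul_lt_mul_of_pos_left key hc

lemma norm_one_add_ofReal_mul_div_sub_le {z : ℂ} (hz : z.im ≠ 0) (t : ℝ) :
    ‖(1 + t * z) / (z - t)‖ ≤ ‖z‖ + ‖1 + z ^ 2‖ / |z.im| := by
  have hzt := sub_ofReal_ne_zero hz t
  have hsplit : (1 + t * z) / (z - t) = -z + (1 + z ^ 2) / (z - t) := by
    field_simp
    ring
  calc ‖(1 + t * z) / (z - t)‖ ≤ ‖-z‖ + ‖(1 + z ^ 2) / (z - t)‖ := hsplit ▸ norm_add_le _ _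
    _ ≤ ‖z‖ + ‖1 + z ^ 2‖ / |z.im| := by
      rw [norm_neg, norm_div]
      gcongr
      exact abs_im_le_norm_sub_ofReal z t

lemma norm_one_add_sq_div_sub_sq (z : ℂ) (t : ℝ) :
    ‖(1 + (t : ℂ) ^ 2) / (z - t) ^ 2‖ = (1 + t ^ 2) / ‖z - t‖ ^ 2 := by
  rw [norm_div, norm_pow, ← ofReal_one, ← ofReal_pow, ← ofReal_add, norm_real,
    Real.norm_of_nonneg (by positivity)]

lemma one_add_sq_div_sq_norm_sub_le {z : ℂ} (hz : z.im ≠ 0) (t : ℝ) :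
    (1 + t ^ 2) / ‖z - t‖ ^ 2 ≤ 2 + (1 + 2 * ‖z‖ ^ 2) / z.im ^ 2 := by
  have him : 0 < z.im ^ 2 := by positivity
  have hle : z.im ^ 2 ≤ ‖z - t‖ ^ 2 := by
    simpa only [sq_abs] using pow_le_pow_left₀ (abs_nonneg _) (abs_im_le_norm_sub_ofReal z t) 2
  have ht : |t| ≤ ‖z‖ + ‖z - t‖ := by
    simpa [norm_real] using norm_sub_le z (z - t)
  have ht2 : t ^ 2 ≤ 2 * ‖z‖ ^ 2 + 2 * ‖z - t‖ ^ 2 := by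
    nlinarith [sq_abs t, abs_nonneg t, sq_nonneg (‖z‖ - ‖z - t‖)]
  calc (1 + t ^ 2) / ‖z - t‖ ^ 2 ≤ 2 + (1 + 2 * ‖z‖ ^ 2) / ‖z - t‖ ^ 2 := by
        rw [div_le_iff₀ (him.trans_le hle), add_mul, div_mul_cancel₀ _ (him.trans_le hle).ne']
        linarith
    _ ≤ 2 + (1 + 2 * ‖z‖ ^ 2) / z.im ^ 2 := by gcongr

lemma norm_sub_ofReal_le_two_mul {z w : ℂ} (hw : w ∈ ball z (|z.im| / 2)) (t : ℝ) :
    ‖z - t‖ ≤ 2 * ‖w - t‖ := by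
  have hwz : ‖z - w‖ < |z.im| / 2 := by rwa [mem_ball, dist_eq, ← norm_neg, neg_sub] at hw
  have := abs_im_le_norm_sub_ofReal z t
  have := norm_sub_le_norm_sub_add_norm_sub z w t
  linarith

lemma im_ne_zero_of_mem_ball {z w : ℂ} (hw : w ∈ ball z (|z.im| / 2)) : w.im ≠ 0 := by
  intro h
  have := (abs_im_le_norm (w - z)).trans_lt (mem_ball_iff_norm.mp hw)
  rw [sub_im, h, zero_sub, abs_neg] at this
  linarith [abs_nonneg z.im]

lemma hasDerivAt_one_add_ofReal_mul_div_sub {w : ℂ} {t : ℝ} (hwt : w - t ≠ 0) :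
    HasDerivAt (fun w : ℂ => (1 + t * w) / (w - t)) (-((1 + (t : ℂ) ^ 2) / (w - t) ^ 2)) w := by
  refine ((((hasDerivAt_id' w).const_mul (t : ℂ)).const_add 1).fun_div
    ((hasDerivAt_id' w).sub_const (t : ℂ)) hwt).congr_deriv ?_
  ring

end Complex

section HerglotzIntegral

variable (σ : Measure ℝ) [IsFiniteMeasure σ] {z : ℂ}

lemma integrable_one_add_sq_div_sq_norm_sub (hz : z.im ≠ 0) :
    Integrable (fun t : ℝ => (1 + t ^ 2) / ‖z - t‖ ^ 2) σ :=
  Integrable.of_bound (Measurable.aestronglyMeasurable (by fun_prop))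
    (2 + (1 + 2 * ‖z‖ ^ 2) / z.im ^ 2) <| ae_of_all _ fun t => by
    rw [Real.norm_of_nonneg (by positivity)]
    exact one_add_sq_div_sq_norm_sub_le hz t

lemma integrable_one_add_sq_div_sub_sq (hz : z.im ≠ 0) :
    Integrable (fun t : ℝ => (1 + (t : ℂ) ^ 2) / (z - t) ^ 2) σ :=
  (integrable_one_add_sq_div_sq_norm_sub σ hz).mono'
    (Measurable.aestronglyMeasurable (by fun_prop))
    (ae_of_all _ fun t => (norm_one_add_sq_div_sub_sq z t).le)

lemma integrable_one_add_ofReal_mul_div_sub (hz : z.im ≠ 0) :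
    Integrable (fun t : ℝ => (1 + t * z) / (z - t)) σ :=
  Integrable.of_bound (Measurable.aestronglyMeasurable (by fun_prop)) _
    (ae_of_all _ (norm_one_add_ofReal_mul_div_sub_le hz))

theorem hasDerivAt_integral_one_add_ofReal_mul_div_sub (hz : z.im ≠ 0) :
    HasDerivAt (fun w : ℂ => ∫ t : ℝ, (1 + t * w) / (w - t) ∂σ)
      (-∫ t : ℝ, (1 + (t : ℂ) ^ 2) / (z - t) ^ 2 ∂σ) z := by
  have hball : ball z (|z.im| / 2) ∈ nhds z := ball_mem_nhds z (half_pos (abs_pos.mpr hz))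
  rw [← integral_neg]
  refine (hasDerivAt_integral_of_dominated_loc_of_deriv_le (F' := fun w (t : ℝ) =>
    -((1 + (t : ℂ) ^ 2) / (w - t) ^ 2)) hball ?_ (integrable_one_add_ofReal_mul_div_sub σ hz)
    (Measurable.aestronglyMeasurable (by fun_prop)) ?_
    ((integrable_one_add_sq_div_sq_norm_sub σ hz).const_mul 4) ?_).2
  · exact Filter.Eventually.of_forall fun w => Measurable.aestronglyMeasurable (by fun_prop)
  · refine ae_of_all _ fun t w hw => ?_
    have hzt : 0 < ‖z - t‖ := norm_pos_iff.mpr (sub_ofReal_ne_zero hz t)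
    rw [norm_neg, norm_one_add_sq_div_sub_sq]
    calc (1 + t ^ 2) / ‖w - t‖ ^ 2 ≤ (1 + t ^ 2) / (‖z - t‖ / 2) ^ 2 := by
          gcongr
          linarith [norm_sub_ofReal_le_two_mul hw t]
      _ = 4 * ((1 + t ^ 2) / ‖z - t‖ ^ 2) := by ring
  · exact ae_of_all _ fun t w hw =>
      hasDerivAt_one_add_ofReal_mul_div_sub (sub_ofReal_ne_zero (im_ne_zero_of_mem_ball hw) t)

lemma re_integral_one_add_sq_div_sub_sq_lt (hσ : σ ≠ 0) (hz : z.im ≠ 0) :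
    (∫ t : ℝ, (1 + (t : ℂ) ^ 2) / (z - t) ^ 2 ∂σ).re <
      ∫ t : ℝ, (1 + t ^ 2) / ‖z - t‖ ^ 2 ∂σ := by
  have hint := integrable_one_add_sq_div_sub_sq σ hz
  rw [← reCLM_apply, ← reCLM.integral_comp_comm hint]
  refine integral_lt_integral_of_forall_lt hσ (reCLM.integrable_comp hint)
    (integrable_one_add_sq_div_sq_norm_sub σ hz) fun t => ?_
  have hpos : (0 : ℝ) < 1 + t ^ 2 := by positivity
  have hzt : (z - t).im ≠ 0 := by simpa using hz
  simpa only [reCLM_apply, ofReal_add, ofReal_one, ofReal_pow] using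
    re_ofReal_div_sq_lt hzt hpos

end HerglotzIntegral

theorem stmt4 (σ : Measure ℝ) [IsFiniteMeasure σ] (γ : ℝ) (x u : ℝ) (hu : 0 < u)
    (hint : (∫ t : ℝ, (1 + t ^ 2) / ((t - x) ^ 2 + u ^ 2) ∂σ) = 1) :
    deriv (fun z : ℂ => z + (γ : ℂ) + ∫ t : ℝ, (1 + (t : ℂ) * z) / (z - (t : ℂ)) ∂σ)
      ((x : ℂ) + (u : ℂ) * Complex.I) ≠ 0 := by
  set z : ℂ := x + u * I
  have hz : z.im ≠ 0 := by simpa [z] using hu.ne'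
  have hσ : σ ≠ 0 := by
    rintro rfl
    simp at hint
  have hnorm (t : ℝ) : ‖z - t‖ ^ 2 = (t - x) ^ 2 + u ^ 2 := by simp [sq_norm_sub_ofReal, z]
  have hlt := re_integral_one_add_sq_div_sub_sq_lt σ hσ hz
  simp only [hnorm, hint] at hlt
  have hderiv := ((hasDerivAt_id' z).add_const (γ : ℂ)).fun_add
    (hasDerivAt_integral_one_add_ofReal_mul_div_sub σ hz)
  rw [hderiv.deriv]
  intro h
  have := congrArg re h
  simp only [add_re, one_re, neg_re, zero_re] at this
  linarith
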